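/- arXiv:1506.06617 — 9 statements merged into one kernel-verified Lean document; each statement's English description precedes it below -/
import Mathlib

section
/- If positive reals (Δ_n) satisfy Δ_n = k_{n+2} Δ_{n+1} + Δ_{n+2} with positive integers k_n, then for all n ≥ -1 and s ≥ 0, Δ_{n+4s+2} / Δ_n < 1 / (k_{n+2} k_{n+3} ⋯ k_{n+4s+3}). -/
lemma stmt2_aux
    (k : ℤ → ℕ) (hk : ∀ n : ℤ, 1 ≤ n → 1 ≤ k n)
    (Δ : ℤ → ℝ) (hΔpos : ∀ n : ℤ, -1 ≤ n → 0 < Δ n)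
    (hrec : ∀ n : ℤ, -1 ≤ n → Δ n = (k (n + 2) : ℝ) * Δ (n + 1) + Δ (n + 2))
    (n : ℤ) (hn : -1 ≤ n) :
    ∀ m : ℕ, Δ (n + (m + 1)) * ∏ i ∈ Finset.range (m + 1), (k (n + 2 + i) : ℝ) < Δ n := by
  intro m
  induction m with
  | zero =>
      have h2 : (0:ℝ) < Δ (n + 2) := hΔpos _ (by linarith)
      have := hrec n hn
      rw [Finset.prod_range_one]
      push_cast
      rw [add_zero]
      nlinarith
  | succ m ih =>
      have hm1 : (-1:ℤ) ≤ n + (m + 1) := by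
        have : (0:ℤ) ≤ (m:ℤ) := Int.natCast_nonneg m
        linarith
      have h3 : (0:ℝ) < Δ (n + (m + 1) + 2) := hΔpos _ (by linarith)
      have hrec' := hrec (n + (m + 1)) hm1
      have hk' : (1:ℝ) ≤ (k (n + (m + 1) + 2) : ℝ) := by
        exact_mod_cast hk _ (by linarith)
      have h1 : Δ (n + (m + 1) + 1) * (k (n + (m + 1) + 2) : ℝ) < Δ (n + (m + 1)) := by
        nlinarith [hΔpos (n + (m + 1) + 1) (by linarith)]
      have hprodpos : (0:ℝ) < ∏ i ∈ Finset.range (m + 1), (k (n + 2 + i) : ℝ) := by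
        apply Finset.prod_pos
        intro i hi
        have : 1 ≤ k (n + 2 + i) := hk _ (by
          have : (0:ℤ) ≤ (i:ℤ) := Int.natCast_nonneg i
          linarith)
        exact_mod_cast Nat.lt_of_lt_of_le Nat.zero_lt_one this
      rw [Finset.prod_range_succ]
      have heq1 : n + ((m:ℤ) + 1 + 1) = n + (m + 1) + 1 := by ring
      have heq2 : n + 2 + ((m:ℤ) + 1) = n + (m + 1) + 2 := by ring
      push_cast
      rw [heq1, heq2]
      calc Δ (n + (m + 1) + 1) * ((∏ i ∈ Finset.range (m + 1), (k (n + 2 + i) : ℝ))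
              * (k (n + (m + 1) + 2) : ℝ))
          = (Δ (n + (m + 1) + 1) * (k (n + (m + 1) + 2) : ℝ))
              * ∏ i ∈ Finset.range (m + 1), (k (n + 2 + i) : ℝ) := by ring
        _ < Δ (n + (m + 1)) * ∏ i ∈ Finset.range (m + 1), (k (n + 2 + i) : ℝ) := by
            exact mul_lt_mul_of_pos_right h1 hprodpos
        _ < Δ n := ih

theorem stmt2
    (k : ℤ → ℕ) (hk : ∀ n : ℤ, 1 ≤ n → 1 ≤ k n)
    (Δ : ℤ → ℝ) (hΔpos : ∀ n : ℤ, -1 ≤ n → 0 < Δ n)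
    (hrec : ∀ n : ℤ, -1 ≤ n → Δ n = (k (n + 2) : ℝ) * Δ (n + 1) + Δ (n + 2)) :
    ∀ n : ℤ, -1 ≤ n → ∀ s : ℕ,
      Δ (n + 4 * s + 2) / Δ n <
        1 / ∏ i ∈ Finset.range (4 * s + 2), (k (n + 2 + i) : ℝ) := by
  intro n hn s
  have key := stmt2_aux k hk Δ hΔpos hrec n hn (4 * s + 1)
  have hprodpos : (0:ℝ) < ∏ i ∈ Finset.range (4 * s + 1 + 1), (k (n + 2 + i) : ℝ) := by
    apply Finset.prod_pos
    intro i hi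
    have : 1 ≤ k (n + 2 + i) := hk _ (by
      have : (0:ℤ) ≤ (i:ℤ) := Int.natCast_nonneg i
      linarith)
    exact_mod_cast Nat.lt_of_lt_of_le Nat.zero_lt_one this
  have heq : n + ((4 * s + 1 : ℕ) : ℤ) + 1 = n + 4 * s + 2 := by push_cast; ring
  have heq2 : 4 * s + 1 + 1 = 4 * s + 2 := rfl
  rw [div_lt_div_iff₀ (hΔpos n hn) (by rw [← heq2]; exact hprodpos), one_mul]
  have := key
  push_cast at this ⊢
  have e : n + (4 * (s:ℤ) + 1 + 1) = n + 4 * s + 2 := by ring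
  rw [e] at this
  linarith
end

section
/- Let a > 1 and let (k_n) be an increasing sequence of positive integers with k_n ≥ 2a for all n. If positive reals (Δ_n) satisfy Δ_n = k_{n+2} Δ_{n+1} + Δ_{n+2}, then for every even n the series δ_n = Σ_{s≥0} a^s Δ_{n+4s+2} converges and satisfies δ_n / Δ_n < 2 / (k_{n+2} k_{n+3}). -/
/-!
Expanding the recurrence twice gives `Δ m = (k (m+2) k (m+3) + 1) Δ (m+2) + k (m+2) Δ (m+3)`, so
`k (m+2) k (m+3) Δ (m+2) < Δ m`. As `k ≥ 2a`, every step of four indices divides `Δ` by at least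
`16 a⁴`, so the terms `a^s Δ (n+4s+2)` are dominated by `Δ (n+2) q^s` with `q = 1 / (16 a³) < 1/2`.
Hence the series is at most `2 Δ (n+2) < 2 Δ n / (k (n+2) k (n+3))`.
-/

lemma le_inv_pow_mul_of_mul_succ_le {u : ℕ → ℝ} {c : ℝ} (hc : 0 < c)
    (h : ∀ s, c * u (s + 1) ≤ u s) (s : ℕ) : u s ≤ (c⁻¹) ^ s * u 0 := by
  induction s with
  | zero => simp
  | succ s ih =>
    calc u (s + 1) ≤ c⁻¹ * u s := by rw [le_inv_mul_iff₀ hc]; exact h s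
      _ ≤ c⁻¹ * ((c⁻¹) ^ s * u 0) := by gcongr
      _ = (c⁻¹) ^ (s + 1) * u 0 := by ring

lemma summable_and_tsum_lt_two_mul_of_le_geometric {f : ℕ → ℝ} {q C : ℝ}
    (hf : ∀ s, 0 ≤ f s) (hfq : ∀ s, f s ≤ q ^ s * C) (hq0 : 0 ≤ q) (hq : q < 1 / 2)
    (hC : 0 < C) : Summable f ∧ ∑' s, f s < 2 * C := by
  have hgeom : Summable (fun s : ℕ => q ^ s * C) :=
    (summable_geometric_of_lt_one hq0 (by linarith)).mul_right C
  have hsum : Summable f := hgeom.of_nonneg_of_le hf hfq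
  refine ⟨hsum, ?_⟩
  calc ∑' s, f s ≤ ∑' s : ℕ, q ^ s * C := hsum.tsum_le_tsum hfq hgeom
    _ = (1 - q)⁻¹ * C := by rw [tsum_mul_right, tsum_geometric_of_lt_one hq0 (by linarith)]
    _ < 2 * C := by
      gcongr
      rw [inv_lt_comm₀ (by linarith) two_pos]
      linarith

section Recurrence

variable {k : ℤ → ℕ} {Δ : ℤ → ℝ} (hΔpos : ∀ n : ℤ, -1 ≤ n → 0 < Δ n)
  (hrec : ∀ n : ℤ, -1 ≤ n → Δ n = (k (n + 2) : ℝ) * Δ (n + 1) + Δ (n + 2))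
include hΔpos hrec

lemma mul_mul_lt_of_rec {m : ℤ} (hm : -1 ≤ m) :
    (k (m + 2) : ℝ) * k (m + 3) * Δ (m + 2) < Δ m := by
  have h₀ := hrec m hm
  have h₁ := hrec (m + 1) (by omega)
  rw [show m + 1 + 2 = m + 3 by ring, show m + 1 + 1 = m + 2 by ring] at h₁
  have := hΔpos (m + 2) (by omega)
  have := hΔpos (m + 3) (by omega)
  have : (0 : ℝ) ≤ k (m + 2) := Nat.cast_nonneg _
  nlinarith

lemma four_mul_sq_mul_lt_of_rec {a : ℝ} (ha : 0 ≤ a)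
    (hka : ∀ n : ℤ, 1 ≤ n → 2 * a ≤ (k n : ℝ)) {m : ℤ} (hm : -1 ≤ m) :
    4 * a ^ 2 * Δ (m + 2) < Δ m := by
  have hk : 2 * a * (2 * a) ≤ (k (m + 2) : ℝ) * k (m + 3) :=
    mul_le_mul (hka _ (by omega)) (hka _ (by omega)) (by positivity) (Nat.cast_nonneg _)
  calc 4 * a ^ 2 * Δ (m + 2) = 2 * a * (2 * a) * Δ (m + 2) := by ring
    _ ≤ (k (m + 2) : ℝ) * k (m + 3) * Δ (m + 2) :=
        mul_le_mul_of_nonneg_right hk (hΔpos _ (by omega)).le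
    _ < Δ m := mul_mul_lt_of_rec hΔpos hrec hm

lemma sixteen_mul_pow_four_mul_lt_of_rec {a : ℝ} (ha : 0 ≤ a)
    (hka : ∀ n : ℤ, 1 ≤ n → 2 * a ≤ (k n : ℝ)) {m : ℤ} (hm : -1 ≤ m) :
    16 * a ^ 4 * Δ (m + 4) < Δ m := by
  have h₀ := four_mul_sq_mul_lt_of_rec hΔpos hrec ha hka hm
  have h₁ := four_mul_sq_mul_lt_of_rec hΔpos hrec ha hka (m := m + 2) (by omega)
  rw [show m + 2 + 2 = m + 4 by ring] at h₁
  nlinarith [hΔpos (m + 4) (by omega)]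

end Recurrence

theorem stmt3_general
    (a : ℝ) (ha : 1 < a)
    (k : ℤ → ℕ)
    (hka : ∀ n : ℤ, 1 ≤ n → 2 * a ≤ (k n : ℝ))
    (Δ : ℤ → ℝ) (hΔpos : ∀ n : ℤ, -1 ≤ n → 0 < Δ n)
    (hrec : ∀ n : ℤ, -1 ≤ n → Δ n = (k (n + 2) : ℝ) * Δ (n + 1) + Δ (n + 2)) :
    ∀ n : ℤ, 0 ≤ n → Even n →
      Summable (fun s : ℕ => a ^ s * Δ (n + 4 * s + 2)) ∧
      (∑' s : ℕ, a ^ s * Δ (n + 4 * s + 2)) / Δ n <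
        2 / ((k (n + 2) : ℝ) * (k (n + 3) : ℝ)) := by
  intro n hn _
  have ha0 : 0 < a := by linarith
  have hdecay : ∀ s : ℕ, 16 * a ^ 4 * Δ (n + 4 * ↑(s + 1) + 2) ≤ Δ (n + 4 * s + 2) := by
    intro s
    rw [show n + 4 * ↑(s + 1) + 2 = n + 4 * s + 2 + 4 by push_cast; ring]
    exact (sixteen_mul_pow_four_mul_lt_of_rec hΔpos hrec ha0.le hka (by omega)).le
  have hbound : ∀ s : ℕ, a ^ s * Δ (n + 4 * s + 2) ≤ (a * (16 * a ^ 4)⁻¹) ^ s * Δ (n + 2) := by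
    intro s
    have := le_inv_pow_mul_of_mul_succ_le (u := fun s : ℕ => Δ (n + 4 * s + 2)) (by positivity)
      hdecay s
    rw [mul_pow, mul_assoc]
    simp only [Nat.cast_zero, mul_zero, add_zero] at this
    gcongr
  have hq : a * (16 * a ^ 4)⁻¹ < 1 / 2 := by
    rw [show a * (16 * a ^ 4)⁻¹ = (16 * a ^ 3)⁻¹ by field_simp, one_div,
      inv_lt_inv₀ (by positivity) two_pos]
    nlinarith [one_lt_pow₀ ha (n := 3) (by norm_num)]
  obtain ⟨hsum, htsum⟩ := summable_and_tsum_lt_two_mul_of_le_geometric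
    (fun s => (mul_pos (pow_pos ha0 s) (hΔpos _ (by omega))).le) hbound (by positivity) hq
    (hΔpos _ (by omega))
  refine ⟨hsum, ?_⟩
  have hkk := mul_mul_lt_of_rec hΔpos hrec (m := n) (by omega)
  have hK : 0 < (k (n + 2) : ℝ) * k (n + 3) :=
    mul_pos (by linarith [hka (n + 2) (by omega)]) (by linarith [hka (n + 3) (by omega)])
  rw [div_lt_div_iff₀ (hΔpos n (by omega)) hK]
  nlinarith [mul_lt_mul_of_pos_right htsum hK]

theorem stmt3
    (a : ℝ) (ha : 1 < a)
    (k : ℤ → ℕ) (hk : ∀ n : ℤ, 1 ≤ n → 1 ≤ k n)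
    (hkmono : ∀ n : ℤ, 1 ≤ n → k n < k (n + 1))
    (hka : ∀ n : ℤ, 1 ≤ n → 2 * a ≤ (k n : ℝ))
    (Δ : ℤ → ℝ) (hΔpos : ∀ n : ℤ, -1 ≤ n → 0 < Δ n)
    (hrec : ∀ n : ℤ, -1 ≤ n → Δ n = (k (n + 2) : ℝ) * Δ (n + 1) + Δ (n + 2)) :
    ∀ n : ℤ, 0 ≤ n → Even n →
      Summable (fun s : ℕ => a ^ s * Δ (n + 4 * s + 2)) ∧
      (∑' s : ℕ, a ^ s * Δ (n + 4 * s + 2)) / Δ n <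
        2 / ((k (n + 2) : ℝ) * (k (n + 3) : ℝ)) :=
  stmt3_general a ha k hka Δ hΔpos hrec
end

section
/- Under the conditions of Lemma 1 (a > 1, k_n increasing with k_1 ≥ 2a, k_1 ≥ 5), the sequences d_n and δ_{2n} constructed there satisfy d_{n+2}/d_n < 1/(k_{n+2} k_{n+3}) and δ_{2n}/d_{2n} < 2/(k_{2n+2} k_{2n+3}) for all n ≥ -1. -/
set_option maxHeartbeats 800000


theorem stmt5
    (a : ℝ) (ha : 1 < a)
    (k : ℤ → ℕ) (hkpos : ∀ n : ℤ, 1 ≤ n → 1 ≤ k n)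
    (hkmono : ∀ n : ℤ, 1 ≤ n → k n < k (n + 1))
    (hk2a : 2 * a ≤ (k 1 : ℝ)) (hk5 : 5 ≤ k 1)
    (d : ℤ → ℝ) (hdm : d (-1) = 1) (hdpos : ∀ n : ℤ, -1 ≤ n → 0 < d n)
    (hsum : ∀ n : ℤ, 0 ≤ n → Even n →
      Summable (fun s : ℕ => a ^ s * d (n + 4 * s + 2)))
    (hrecE : ∀ n : ℤ, 0 ≤ n → Even n →
      d n = (k (n + 2) : ℝ) * d (n + 1) + d (n + 2))
    (hrecO : ∀ n : ℤ, -1 ≤ n → Odd n →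
      d n = (k (n + 2) : ℝ) * d (n + 1) + d (n + 2) +
        (a - 1) * ∑' s : ℕ, a ^ s * d ((n + 1) + 4 * s + 2)) :
    ∀ n : ℤ, -1 ≤ n →
      d (n + 2) / d n < 1 / ((k (n + 2) : ℝ) * (k (n + 3) : ℝ)) ∧
      (Even n → 0 ≤ n →
        (∑' s : ℕ, a ^ s * d (n + 4 * s + 2)) / d n <
          2 / ((k (n + 2) : ℝ) * (k (n + 3) : ℝ))) := by
  have hK5 : (5:ℝ) ≤ (k 1 : ℝ) := by exact_mod_cast hk5
  have hKpos : (0:ℝ) < (k 1 : ℝ) := by linarith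
  have hkmono' : ∀ i : ℤ, 1 ≤ i → k 1 ≤ k i :=
    Int.le_induction le_rfl (fun m hm ih => ih.trans (hkmono m hm).le)
  have hk5' : ∀ i : ℤ, 1 ≤ i → (5:ℝ) ≤ (k i : ℝ) := by
    intro i hi
    exact hK5.trans (by exact_mod_cast hkmono' i hi)
  -- key strict inequality
  have hA : ∀ m : ℤ, -1 ≤ m → (k (m+2) : ℝ) * d (m+1) < d m := by
    intro m hm
    rcases Int.even_or_odd m with he | ho
    · have hm0 : 0 ≤ m := by
        rcases he with ⟨r, hr⟩; omega
      have h1 := hrecE m hm0 he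
      have h2 := hdpos (m+2) (by linarith)
      linarith
    · have h1 := hrecO m hm ho
      have h2 := hdpos (m+2) (by linarith)
      have hts : 0 ≤ ∑' s : ℕ, a ^ s * d ((m + 1) + 4 * s + 2) := by
        apply tsum_nonneg
        intro s
        have hs : (0:ℤ) ≤ (s:ℤ) := Int.natCast_nonneg s
        exact mul_nonneg (pow_nonneg (by linarith) s)
          (hdpos _ (by linarith)).le
      nlinarith [mul_nonneg (by linarith : (0:ℝ) ≤ a - 1) hts]
  have hB : ∀ m : ℤ, -1 ≤ m → (k 1 : ℝ) * d (m+1) < d m := by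
    intro m hm
    have h1 := hA m hm
    have h2 := hdpos (m+1) (by linarith)
    have h3 : (k 1 : ℝ) ≤ (k (m+2) : ℝ) := by
      exact_mod_cast hkmono' (m+2) (by linarith)
    nlinarith [mul_le_mul_of_nonneg_right h3 h2.le]
  have hC : ∀ n : ℤ, -1 ≤ n → ∀ j : ℕ, d (n + j) * (k 1 : ℝ) ^ j ≤ d n := by
    intro n hn j
    induction j with
    | zero => simp
    | succ j ih =>
      have hj : (0:ℤ) ≤ (j:ℤ) := Int.natCast_nonneg j
      have hb := hB (n + j) (by linarith)
      have hidx : n + ((j:ℤ)+1) = (n + j) + 1 := by ring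
      have hKj : (0:ℝ) ≤ (k 1 : ℝ) ^ j := by positivity
      have hd1 := hdpos (n + j + 1) (by linarith)
      calc d (n + ((j+1:ℕ):ℤ)) * (k 1 : ℝ) ^ (j+1)
          = ((k 1 : ℝ) * d ((n + j) + 1)) * (k 1 : ℝ) ^ j := by
            push_cast; ring_nf
        _ ≤ d (n + j) * (k 1 : ℝ) ^ j := by nlinarith
        _ ≤ d n := ih
  intro n hn
  have hdn := hdpos n hn
  have hdn1 := hdpos (n+1) (by linarith)
  have hdn2 := hdpos (n+2) (by linarith)
  have hk2 := hk5' (n+2) (by linarith)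
  have hk3 := hk5' (n+3) (by linarith)
  have hA1 := hA n hn
  have hA2 := hA (n+1) (by linarith)
  have hA2' : (k (n+3) : ℝ) * d (n+2) < d (n+1) := by
    have : n + 1 + 2 = n + 3 := by ring
    rw [this] at hA2
    have : n + 1 + 1 = n + 2 := by ring
    rwa [this] at hA2
  have hprod : d (n+2) * ((k (n+2) : ℝ) * (k (n+3) : ℝ)) < d n := by
    nlinarith [mul_lt_mul_of_pos_left hA2' (show (0:ℝ) < (k (n+2):ℝ) by linarith)]
  have hfirst : d (n + 2) / d n < 1 / ((k (n + 2) : ℝ) * (k (n + 3) : ℝ)) := by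
    rw [div_lt_div_iff₀ hdn (by positivity)]
    linarith
  refine ⟨hfirst, fun hev hn0 => ?_⟩
  -- second part
  set K : ℝ := (k 1 : ℝ) with hK
  set r : ℝ := a / K ^ 4 with hr
  have hrpos : 0 < r := by
    apply div_pos (by linarith) (by positivity)
  have hrsmall : r ≤ 1/250 := by
    rw [hr, div_le_div_iff₀ (by positivity) (by norm_num)]
    have h125 : (125:ℝ) ≤ K^3 := by nlinarith [sq_nonneg (K-5), sq_nonneg K]
    nlinarith [mul_le_mul_of_nonneg_right h125 (by linarith : (0:ℝ) ≤ K), hk2a, hK5]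
  have hr1 : r < 1 := by linarith
  have hterm : ∀ s : ℕ, a ^ s * d (n + 4 * s + 2) ≤ d (n+2) * r ^ s := by
    intro s
    have hs : (0:ℤ) ≤ (s:ℤ) := Int.natCast_nonneg s
    have hc := hC (n+2) (by linarith) (4*s)
    have hidx : (n+2) + ((4*s:ℕ):ℤ) = n + 4*s + 2 := by push_cast; ring
    rw [hidx] at hc
    have hKs : (0:ℝ) < K ^ (4*s) := by positivity
    have hd : d (n + 4*s + 2) ≤ d (n+2) / K ^ (4*s) := by
      rw [le_div_iff₀ hKs]; exact hc
    have hap : (0:ℝ) < a ^ s := by positivity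
    calc a ^ s * d (n + 4 * s + 2) ≤ a ^ s * (d (n+2) / K ^ (4*s)) := by
          exact mul_le_mul_of_nonneg_left hd hap.le
      _ = d (n+2) * r ^ s := by
          rw [hr, div_pow, pow_mul]
          field_simp
  have hgsum : Summable (fun s : ℕ => d (n+2) * r ^ s) :=
    (summable_geometric_of_lt_one hrpos.le hr1).mul_left _
  have hS : (∑' s : ℕ, a ^ s * d (n + 4 * s + 2)) ≤ d (n+2) * (1 - r)⁻¹ := by
    have := Summable.tsum_le_tsum hterm (hsum n hn0 hev) hgsum
    rwa [tsum_mul_left, tsum_geometric_of_lt_one hrpos.le hr1] at this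
  have hS2 : (∑' s : ℕ, a ^ s * d (n + 4 * s + 2)) < 2 * d (n+2) := by
    have h1 : (1 - r)⁻¹ ≤ (1 - 1/250)⁻¹ := by
      apply inv_anti₀ (by norm_num) (by linarith)
    have h2 : ((1:ℝ) - 1/250)⁻¹ < 2 := by norm_num
    nlinarith
  rw [div_lt_div_iff₀ hdn (by positivity : (0:ℝ) < (k (n+2):ℝ) * (k (n+3):ℝ))]
  nlinarith [mul_lt_mul_of_pos_right hS2
    (show (0:ℝ) < (k (n+2):ℝ) * (k (n+3):ℝ) by positivity), hprod]
end

section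
/- Under the conditions of Lemma 1, the sequence d_n satisfies d_{n-1} < (k_{n+1} + 1) d_n for all n ≥ 0. -/
/-!
Each `d m` dominates `k (m + 2) * d (m + 1) ≥ 2a * d (m + 1)`, so `d` decays at least like
`(2a)⁻ᵐ`. Hence the terms `aˢ d (n + 4s + 2)` of `δ` decay at least like `2⁻ˢ`, giving
`δ n ≤ 2 d (n + 2)`, which is too small to push `d (n - 1)` past `(k (n + 1) + 1) d n`.
-/

theorem tsum_le_div_one_sub_of_succ_le_mul {w : ℕ → ℝ} {c : ℝ} (hw : ∀ s, 0 ≤ w s)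
    (hc₀ : 0 ≤ c) (hc₁ : c < 1) (h : ∀ s, w (s + 1) ≤ c * w s) :
    ∑' s, w s ≤ w 0 / (1 - c) := by
  have hgeom : ∀ s, w s ≤ w 0 * c ^ s := fun s => by
    rw [mul_comm]
    exact le_geom hc₀ s fun j _ => h j
  have hsumm : Summable fun s => w 0 * c ^ s :=
    (summable_geometric_of_lt_one hc₀ hc₁).mul_left _
  calc ∑' s, w s ≤ ∑' s, w 0 * c ^ s :=
        (hsumm.of_nonneg_of_le hw hgeom).tsum_le_tsum hgeom hsumm
    _ = w 0 / (1 - c) := by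
        rw [tsum_mul_left, tsum_geometric_of_lt_one hc₀ hc₁, div_eq_mul_inv]

namespace Lemma1

variable {a : ℝ} {d : ℤ → ℝ}

/-- `delta a d (2n)` is the paper's `δ_{2n}`. -/
noncomputable def delta (a : ℝ) (d : ℤ → ℝ) (n : ℤ) : ℝ :=
  ∑' s : ℕ, a ^ s * d (n + 4 * s + 2)

theorem delta_nonneg (ha : 0 ≤ a) (hdpos : ∀ n : ℤ, -1 ≤ n → 0 < d n) {n : ℤ} (hn : -1 ≤ n) :
    0 ≤ delta a d n :=
  tsum_nonneg fun s => mul_nonneg (pow_nonneg ha s) (hdpos _ (by omega)).le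

theorem two_mul_mul_succ_le (ha : 1 < a) {k : ℤ → ℕ} (hk : ∀ m : ℤ, 1 ≤ m → 2 * a ≤ k m)
    (hdpos : ∀ n : ℤ, -1 ≤ n → 0 < d n)
    (hrecE : ∀ n : ℤ, 0 ≤ n → Even n → d n = (k (n + 2) : ℝ) * d (n + 1) + d (n + 2))
    (hrecO : ∀ n : ℤ, -1 ≤ n → Odd n →
      d n = (k (n + 2) : ℝ) * d (n + 1) + d (n + 2) + (a - 1) * delta a d (n + 1))
    {m : ℤ} (hm : -1 ≤ m) : 2 * a * d (m + 1) ≤ d m := by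
  have hk2 := hk (m + 2) (by omega)
  have hd1 := hdpos (m + 1) (by omega)
  have hd2 := hdpos (m + 2) (by omega)
  rcases Int.even_or_odd m with he | ho
  · have hm0 : 0 ≤ m := by obtain ⟨c, hc⟩ := he; omega
    rw [hrecE m hm0 he]
    nlinarith
  · have hδ := delta_nonneg (a := a) (by linarith) hdpos (n := m + 1) (by omega)
    rw [hrecO m hm ho]
    nlinarith [mul_nonneg (sub_nonneg.2 ha.le) hδ]

section Decay

variable (ha : 1 < a) (hdpos : ∀ n : ℤ, -1 ≤ n → 0 < d n)
  (hstep : ∀ m : ℤ, -1 ≤ m → 2 * a * d (m + 1) ≤ d m)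
include ha hdpos hstep

theorem succ_lt {m : ℤ} (hm : -1 ≤ m) : d (m + 1) < d m := by
  nlinarith [hstep m hm, hdpos (m + 1) (by omega)]

theorem antitoneOn_Ici : AntitoneOn d (Set.Ici (-1)) :=
  antitoneOn_of_succ_le Set.ordConnected_Ici fun m _ hm _ => by
    rw [Order.succ_eq_add_one]
    exact (succ_lt ha hdpos hstep hm).le

theorem mul_add_four_le {m : ℤ} (hm : -1 ≤ m) : a * d (m + 4) ≤ 2⁻¹ * d m := by
  have h4 := hstep (m + 3) (by omega)
  have h3 : d (m + 3) ≤ d m :=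
    antitoneOn_Ici ha hdpos hstep (Set.mem_Ici.2 hm) (Set.mem_Ici.2 (by omega)) (by omega)
  rw [show m + 3 + 1 = m + 4 by ring] at h4
  linarith

theorem delta_le {n : ℤ} (hn : -1 ≤ n) : delta a d n ≤ 2 * d (n + 2) := by
  have hbound := tsum_le_div_one_sub_of_succ_le_mul (w := fun s : ℕ => a ^ s * d (n + 4 * s + 2))
    (fun s => mul_nonneg (pow_nonneg (by linarith) s) (hdpos _ (by omega)).le)
    (by norm_num : (0 : ℝ) ≤ 2⁻¹) (by norm_num) fun s => by
      have h := mul_add_four_le ha hdpos hstep (m := n + 4 * s + 2) (by omega)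
      rw [show n + 4 * s + 2 + 4 = n + 4 * (s + 1 : ℕ) + 2 by push_cast; ring] at h
      calc a ^ (s + 1) * d (n + 4 * (s + 1 : ℕ) + 2)
          = a ^ s * (a * d (n + 4 * (s + 1 : ℕ) + 2)) := by ring
        _ ≤ a ^ s * (2⁻¹ * d (n + 4 * s + 2)) := by gcongr
        _ = 2⁻¹ * (a ^ s * d (n + 4 * s + 2)) := by ring
  calc delta a d n ≤ d (n + 2) / (1 - 2⁻¹) := by simpa [delta] using hbound
    _ = 2 * d (n + 2) := by ring

theorem succ_add_mul_delta_lt {m : ℤ} (hm : -1 ≤ m) :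
    d (m + 2) + (a - 1) * delta a d (m + 1) < d (m + 1) := by
  have hδ := delta_le ha hdpos hstep (n := m + 1) (by omega)
  have h3 := hstep (m + 2) (by omega)
  have h2 := hstep (m + 1) (by omega)
  rw [show m + 1 + 2 = m + 3 by ring] at hδ
  rw [show m + 2 + 1 = m + 3 by ring] at h3
  rw [show m + 1 + 1 = m + 2 by ring] at h2
  nlinarith [mul_le_mul_of_nonneg_left hδ (sub_nonneg.2 ha.le), hdpos (m + 2) (by omega),
    hdpos (m + 3) (by omega)]

end Decay

end Lemma1

open Lemma1 in
theorem stmt6_general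
    (a : ℝ) (ha : 1 < a)
    (k : ℤ → ℕ)
    (hkmono : ∀ n : ℤ, 1 ≤ n → k n < k (n + 1))
    (hk2a : 2 * a ≤ (k 1 : ℝ))
    (d : ℤ → ℝ) (hdpos : ∀ n : ℤ, -1 ≤ n → 0 < d n)
    (hrecE : ∀ n : ℤ, 0 ≤ n → Even n →
      d n = (k (n + 2) : ℝ) * d (n + 1) + d (n + 2))
    (hrecO : ∀ n : ℤ, -1 ≤ n → Odd n →
      d n = (k (n + 2) : ℝ) * d (n + 1) + d (n + 2) +
        (a - 1) * ∑' s : ℕ, a ^ s * d ((n + 1) + 4 * s + 2)) :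
    ∀ n : ℤ, 0 ≤ n → d (n - 1) < ((k (n + 1) : ℝ) + 1) * d n := by
  have hkmon : MonotoneOn k (Set.Ici 1) :=
    monotoneOn_of_le_succ Set.ordConnected_Ici fun m _ hm _ => by
      rw [Order.succ_eq_add_one]
      exact (hkmono m hm).le
  have hk : ∀ m : ℤ, 1 ≤ m → 2 * a ≤ k m := fun m hm =>
    hk2a.trans (Nat.cast_le.2 (hkmon Set.self_mem_Ici hm hm))
  have hstep := fun m => two_mul_mul_succ_le (m := m) ha hk hdpos hrecE hrecO
  intro n hn
  obtain ⟨m, rfl⟩ : ∃ m, n = m + 1 := ⟨n - 1, by ring⟩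
  rw [add_sub_cancel_right, add_assoc, one_add_one_eq_two]
  rcases Int.even_or_odd m with he | ho
  · have hm0 : 0 ≤ m := by obtain ⟨c, hc⟩ := he; omega
    rw [hrecE m hm0 he]
    have hdec := succ_lt ha hdpos hstep (m := m + 1) (by omega)
    rw [add_assoc, one_add_one_eq_two] at hdec
    linarith
  · rw [hrecO m (by omega) ho]
    have hdec := succ_add_mul_delta_lt ha hdpos hstep (m := m) (by omega)
    rw [delta] at hdec
    linarith

theorem stmt6
    (a : ℝ) (ha : 1 < a)
    (k : ℤ → ℕ) (hkpos : ∀ n : ℤ, 1 ≤ n → 1 ≤ k n)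
    (hkmono : ∀ n : ℤ, 1 ≤ n → k n < k (n + 1))
    (hk2a : 2 * a ≤ (k 1 : ℝ)) (hk5 : 5 ≤ k 1)
    (d : ℤ → ℝ) (hdm : d (-1) = 1) (hdpos : ∀ n : ℤ, -1 ≤ n → 0 < d n)
    (hsum : ∀ n : ℤ, 0 ≤ n → Even n →
      Summable (fun s : ℕ => a ^ s * d (n + 4 * s + 2)))
    (hrecE : ∀ n : ℤ, 0 ≤ n → Even n →
      d n = (k (n + 2) : ℝ) * d (n + 1) + d (n + 2))
    (hrecO : ∀ n : ℤ, -1 ≤ n → Odd n →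
      d n = (k (n + 2) : ℝ) * d (n + 1) + d (n + 2) +
        (a - 1) * ∑' s : ℕ, a ^ s * d ((n + 1) + 4 * s + 2)) :
    ∀ n : ℤ, 0 ≤ n → d (n - 1) < ((k (n + 1) : ℝ) + 1) * d n :=
  stmt6_general a ha k hkmono hk2a d hdpos hrecE hrecO
end

section
/- If sequences of positive reals d_n^{(r)} (n ≥ -1, r ≥ 0) satisfy the monotone recursion d_n^{(r+1)} = k_{n+2} d_{n+1}^{(r)} + d_{n+2}^{(r)} + (a-1)δ_n^{(r)} with δ_n^{(r)} = Σ_{s≥0} a^s d_{n+4s+2}^{(r)} for n even and 0 for n odd, then d_n^{(r+1)}/d_n^{(r)} ≤ sup_{s ≥ n+r} d_s^{(1)}/d_s^{(0)}, assuming all quantities are finite. -/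
theorem stmt7
    (a : ℝ) (ha : 1 < a)
    (k : ℤ → ℕ) (hkpos : ∀ n : ℤ, 1 ≤ n → 1 ≤ k n)
    (d : ℤ → ℕ → ℝ)
    (hpos : ∀ (n : ℤ) (r : ℕ), -1 ≤ n → 0 < d n r)
    (hfin : ∀ (n : ℤ) (r : ℕ), -1 ≤ n →
      Summable (fun s : ℕ => a ^ s * d (n + 4 * s + 2) r))
    (hbase : ∀ n : ℤ, -1 ≤ n →
      d n 0 = (k (n + 2) : ℝ) * d (n + 1) 0 + d (n + 2) 0)
    (hrec : ∀ (n : ℤ) (r : ℕ), -1 ≤ n →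
      d n (r + 1) = (k (n + 2) : ℝ) * d (n + 1) r + d (n + 2) r +
        (a - 1) * (if Even n then ∑' s : ℕ, a ^ s * d (n + 4 * s + 2) r else 0)) :
    ∀ (n : ℤ) (r : ℕ), -1 ≤ n → ∀ C : ℝ,
      (∀ s : ℤ, n + r ≤ s → d s 1 / d s 0 ≤ C) →
      d n (r + 1) / d n r ≤ C := by
  have key : ∀ r : ℕ, ∀ n : ℤ, -1 ≤ n → ∀ C : ℝ,
      (∀ s : ℤ, n + r ≤ s → d s 1 / d s 0 ≤ C) →
      d n (r + 1) ≤ C * d n r := by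
    intro r
    induction r with
    | zero =>
      intro n hn C hC
      have h := hC n (by simp)
      exact (div_le_iff₀ (hpos n 0 hn)).mp h
    | succ r ih =>
      intro n hn C hC
      have hCnn : 0 ≤ C := by
        have h := hC (n + (r+1)) (by push_cast; linarith)
        have hp1 := hpos (n + (r+1)) 1 (by linarith [Int.ofNat_nonneg (r+1)])
        have hp0 := hpos (n + (r+1)) 0 (by linarith [Int.ofNat_nonneg (r+1)])
        have : 0 < d (n + (r+1)) 1 / d (n + (r+1)) 0 := div_pos hp1 hp0
        linarith
      have hC' : ∀ m : ℤ, n + 1 ≤ m → d m (r + 1) ≤ C * d m r := by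
        intro m hm
        apply ih m (by linarith) C
        intro s hs
        apply hC s
        push_cast at hs ⊢
        linarith
      rw [hrec n (r + 1) hn, hrec n r hn]
      have h1 : (k (n + 2) : ℝ) * d (n + 1) (r + 1) ≤ C * ((k (n + 2) : ℝ) * d (n + 1) r) := by
        have := hC' (n + 1) le_rfl
        have hk : (0:ℝ) ≤ (k (n+2) : ℝ) := Nat.cast_nonneg _
        calc (k (n + 2) : ℝ) * d (n + 1) (r + 1) ≤ (k (n + 2) : ℝ) * (C * d (n + 1) r) :=
              mul_le_mul_of_nonneg_left this hk
          _ = C * ((k (n + 2) : ℝ) * d (n + 1) r) := by ring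
      have h2 : d (n + 2) (r + 1) ≤ C * d (n + 2) r := hC' (n + 2) (by linarith)
      have h3 : (if Even n then ∑' s : ℕ, a ^ s * d (n + 4 * s + 2) (r + 1) else 0)
          ≤ C * (if Even n then ∑' s : ℕ, a ^ s * d (n + 4 * s + 2) r else 0) := by
        by_cases he : Even n
        · simp only [he, if_true]
          have hterm : ∀ s : ℕ, a ^ s * d (n + 4 * s + 2) (r + 1)
              ≤ C * (a ^ s * d (n + 4 * s + 2) r) := by
            intro s
            have hm : n + 1 ≤ n + 4 * s + 2 := by
              have : (0:ℤ) ≤ (s : ℤ) := Int.ofNat_nonneg s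
              linarith
            have := hC' (n + 4 * s + 2) hm
            have hae : (0:ℝ) ≤ a ^ s := le_of_lt (pow_pos (by linarith) s)
            calc a ^ s * d (n + 4 * s + 2) (r + 1) ≤ a ^ s * (C * d (n + 4 * s + 2) r) :=
                  mul_le_mul_of_nonneg_left this hae
              _ = C * (a ^ s * d (n + 4 * s + 2) r) := by ring
          calc (∑' s : ℕ, a ^ s * d (n + 4 * s + 2) (r + 1))
              ≤ ∑' s : ℕ, C * (a ^ s * d (n + 4 * s + 2) r) :=
                Summable.tsum_le_tsum hterm (hfin n (r+1) hn) ((hfin n r hn).mul_left C)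
            _ = C * ∑' s : ℕ, a ^ s * d (n + 4 * s + 2) r := tsum_mul_left
        · simp [he]
      have ha1 : (0:ℝ) ≤ a - 1 := by linarith
      have h3' : (a - 1) * (if Even n then ∑' s : ℕ, a ^ s * d (n + 4 * s + 2) (r + 1) else 0)
          ≤ C * ((a - 1) * (if Even n then ∑' s : ℕ, a ^ s * d (n + 4 * s + 2) r else 0)) := by
        calc (a - 1) * _ ≤ (a - 1) * (C * (if Even n then ∑' s : ℕ, a ^ s * d (n + 4 * s + 2) r else 0)) :=
              mul_le_mul_of_nonneg_left h3 ha1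
          _ = C * ((a - 1) * _) := by ring
      linarith
  intro n r hn C hC
  rw [div_le_iff₀ (hpos n r hn)]
  exact key r n hn C hC
end

section
/- Let d_n and δ_{2n} be as in Lemma 1. Then d_0 + a δ_0 + a δ_2 < 1, where d_{-1} = 1. Consequently the piecewise linear lift f_0 defined by slope a on (0, δ_0), slope a^{-1} on (d_0 + aδ_2, d_0 + aδ_0 + aδ_2), slope 1 elsewhere on [0,1], with f_0(0) = d_0, is well-defined and satisfies f_0(1) = f_0(0) + 1. -/
set_option maxHeartbeats 1000000 in
theorem stmt9
    (a : ℝ) (ha : 1 < a)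
    (k : ℤ → ℕ) (hkpos : ∀ n : ℤ, 1 ≤ n → 1 ≤ k n)
    (hkmono : ∀ n : ℤ, 1 ≤ n → k n < k (n + 1))
    (hk2a : 2 * a ≤ (k 1 : ℝ)) (hk5 : 5 ≤ k 1)
    (d : ℤ → ℝ) (hdm : d (-1) = 1) (hdpos : ∀ n : ℤ, -1 ≤ n → 0 < d n)
    (hsum : ∀ n : ℤ, 0 ≤ n → Even n →
      Summable (fun s : ℕ => a ^ s * d (n + 4 * s + 2)))
    (hrecE : ∀ n : ℤ, 0 ≤ n → Even n →
      d n = (k (n + 2) : ℝ) * d (n + 1) + d (n + 2))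
    (hrecO : ∀ n : ℤ, -1 ≤ n → Odd n →
      d n = (k (n + 2) : ℝ) * d (n + 1) + d (n + 2) +
        (a - 1) * ∑' s : ℕ, a ^ s * d ((n + 1) + 4 * s + 2))
    (δ0 δ2 : ℝ)
    (hδ0 : δ0 = ∑' s : ℕ, a ^ s * d (4 * s + 2))
    (hδ2 : δ2 = ∑' s : ℕ, a ^ s * d (4 * s + 4))
    (f0 : ℝ → ℝ)
    (hf1 : ∀ x : ℝ, 0 ≤ x → x ≤ δ0 → f0 x = a * x + d 0)
    (hf2 : ∀ x : ℝ, δ0 ≤ x → x ≤ d 0 + a * δ2 → f0 x = x + d 0 + (a - 1) * δ0)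
    (hf3 : ∀ x : ℝ, d 0 + a * δ2 ≤ x → x ≤ d 0 + a * δ0 + a * δ2 →
      f0 x = a⁻¹ * x + (2 - a⁻¹) * d 0 + (a - 1) * δ0 + (a - 1) * δ2)
    (hf4 : ∀ x : ℝ, d 0 + a * δ0 + a * δ2 ≤ x → x ≤ 1 → f0 x = x + d 0) :
    d 0 + a * δ0 + a * δ2 < 1 ∧ f0 1 = f0 0 + 1 := by
  obtain ⟨K, hKdef⟩ : ∃ K : ℝ, K = ((k 1 : ℕ) : ℝ) := ⟨_, rfl⟩
  rw [← hKdef] at hk2a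
  have hK5 : (5:ℝ) ≤ K := by rw [hKdef]; exact_mod_cast hk5
  have hKpos : (0:ℝ) < K := by linarith
  have hapos : (0:ℝ) < a := by linarith
  -- k is monotone above 1
  have kmono : ∀ n : ℤ, 1 ≤ n → K ≤ (k n : ℝ) := by
    refine Int.le_induction ?_ ?_
    · exact hKdef.le
    · intro m hm ih
      have h := hkmono m hm
      have h' : (k m : ℝ) ≤ (k (m+1) : ℝ) := by exact_mod_cast h.le
      linarith
  -- one-step decay
  have step : ∀ m : ℤ, -1 ≤ m → K * d (m+1) ≤ d m := by
    intro m hm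
    have hk' : K ≤ (k (m+2) : ℝ) := kmono (m+2) (by omega)
    have h1 : 0 < d (m+1) := hdpos _ (by omega)
    have h2 : 0 < d (m+2) := hdpos _ (by omega)
    have hkd : K * d (m+1) ≤ (k (m+2) : ℝ) * d (m+1) :=
      mul_le_mul_of_nonneg_right hk' h1.le
    rcases Int.even_or_odd m with he | ho
    · have hm0 : 0 ≤ m := by rcases he with ⟨t, ht⟩; omega
      have hrec := hrecE m hm0 he
      nlinarith
    · have hrec := hrecO m hm ho
      have hT : 0 ≤ ∑' s : ℕ, a ^ s * d ((m + 1) + 4 * s + 2) := by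
        apply tsum_nonneg
        intro s
        have hs : (0:ℤ) ≤ (s:ℤ) := Int.natCast_nonneg s
        have hd' : 0 < d ((m+1) + 4 * (s:ℤ) + 2) := hdpos _ (by omega)
        exact mul_nonneg (pow_nonneg hapos.le s) hd'.le
      nlinarith [mul_nonneg (by linarith : (0:ℝ) ≤ a - 1) hT]
  -- iterated decay
  have bound : ∀ m : ℕ, K ^ m * d (m : ℤ) ≤ d 0 := by
    intro m
    induction m with
    | zero => simp
    | succ n ih =>
      have hstep := step (n : ℤ) (by omega)
      have hpow : (0:ℝ) ≤ K ^ n := by positivity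
      calc K ^ (n+1) * d (((n+1:ℕ)):ℤ) = K ^ n * (K * d ((n:ℤ)+1)) := by push_cast; ring
        _ ≤ K ^ n * d (n:ℤ) := mul_le_mul_of_nonneg_left hstep hpow
        _ ≤ d 0 := ih
  have hK2 : (25:ℝ) ≤ K ^ 2 := by nlinarith [sq_nonneg (K - 5)]
  have hK4 : (625:ℝ) ≤ K ^ 4 := by nlinarith [hK2, sq_nonneg (K ^ 2 - 25)]
  have hK3 : (125:ℝ) ≤ K ^ 3 := by nlinarith [hK2, hK5]
  have hKK4 : K ≤ K ^ 4 := by nlinarith [hK3, hKpos]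
  obtain ⟨r, hrdef⟩ : ∃ r : ℝ, r = a / K ^ 4 := ⟨_, rfl⟩
  have hr0 : 0 ≤ r := by rw [hrdef]; positivity
  have hrhalf : r ≤ 1/2 := by
    rw [hrdef, div_le_iff₀ (by linarith : (0:ℝ) < K ^ 4)]
    nlinarith
  have hr1 : r < 1 := by linarith
  have hG : (1 - r)⁻¹ ≤ 2 := by
    have h1r : (1:ℝ)/2 ≤ 1 - r := by linarith
    have := inv_anti₀ (by norm_num : (0:ℝ) < 1/2) h1r
    simpa using this
  have hgeo : Summable (fun s : ℕ => r ^ s) := summable_geometric_of_lt_one hr0 hr1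
  have hgeot : ∑' s : ℕ, r ^ s = (1 - r)⁻¹ := tsum_geometric_of_lt_one hr0 hr1
  have hd0 : 0 < d 0 := hdpos 0 (by norm_num)
  have hd1 : 0 < d 1 := hdpos 1 (by norm_num)
  have hKne : K ≠ 0 := ne_of_gt hKpos
  -- termwise bounds
  have term0 : ∀ s : ℕ, a ^ s * d (4 * s + 2) ≤ d 0 / K ^ 2 * r ^ s := by
    intro s
    have hb := bound (4*s+2)
    push_cast at hb
    have hKe : K ^ (4*s+2) = (K ^ 4) ^ s * K ^ 2 := by rw [pow_add, pow_mul]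
    have hKp : (0:ℝ) < K ^ (4*s+2) := by positivity
    have hd' : d (4 * (s:ℤ) + 2) ≤ d 0 / K ^ (4*s+2) := by
      rw [le_div_iff₀ hKp]; linarith [hb]
    have h1 : a ^ s * d (4 * (s:ℤ) + 2) ≤ a ^ s * (d 0 / K ^ (4*s+2)) :=
      mul_le_mul_of_nonneg_left hd' (pow_nonneg hapos.le s)
    have h2 : a ^ s * (d 0 / K ^ (4*s+2)) = d 0 / K ^ 2 * r ^ s := by
      rw [hKe, hrdef, div_pow]
      field_simp
    linarith [h1, h2.symm.le]
  have term2 : ∀ s : ℕ, a ^ s * d (4 * s + 4) ≤ d 0 / K ^ 4 * r ^ s := by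
    intro s
    have hb := bound (4*s+4)
    push_cast at hb
    have hKe : K ^ (4*s+4) = (K ^ 4) ^ s * K ^ 4 := by rw [pow_add, pow_mul]
    have hKp : (0:ℝ) < K ^ (4*s+4) := by positivity
    have hd' : d (4 * (s:ℤ) + 4) ≤ d 0 / K ^ (4*s+4) := by
      rw [le_div_iff₀ hKp]; linarith [hb]
    have h1 : a ^ s * d (4 * (s:ℤ) + 4) ≤ a ^ s * (d 0 / K ^ (4*s+4)) :=
      mul_le_mul_of_nonneg_left hd' (pow_nonneg hapos.le s)
    have h2 : a ^ s * (d 0 / K ^ (4*s+4)) = d 0 / K ^ 4 * r ^ s := by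
      rw [hKe, hrdef, div_pow]
      field_simp
    linarith [h1, h2.symm.le]
  have hsum0 : Summable (fun s : ℕ => a ^ s * d (4 * s + 2)) := by
    have := hsum 0 le_rfl Even.zero
    simpa using this
  have hsum2 : Summable (fun s : ℕ => a ^ s * d (4 * s + 4)) := by
    refine (hsum 2 (by norm_num) ⟨1, by norm_num⟩).congr fun s => ?_
    congr 2
    ring
  have hδ0b : δ0 ≤ d 0 / K ^ 2 * (1 - r)⁻¹ := by
    rw [hδ0]
    calc (∑' s : ℕ, a ^ s * d (4 * s + 2)) ≤ ∑' s : ℕ, d 0 / K ^ 2 * r ^ s :=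
          Summable.tsum_le_tsum term0 hsum0 (hgeo.mul_left _)
      _ = d 0 / K ^ 2 * (1 - r)⁻¹ := by rw [tsum_mul_left, hgeot]
  have hδ2b : δ2 ≤ d 0 / K ^ 4 * (1 - r)⁻¹ := by
    rw [hδ2]
    calc (∑' s : ℕ, a ^ s * d (4 * s + 4)) ≤ ∑' s : ℕ, d 0 / K ^ 4 * r ^ s :=
          Summable.tsum_le_tsum term2 hsum2 (hgeo.mul_left _)
      _ = d 0 / K ^ 4 * (1 - r)⁻¹ := by rw [tsum_mul_left, hgeot]
  have hδ0nn : 0 ≤ δ0 := by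
    rw [hδ0]
    apply tsum_nonneg
    intro s
    have hs : (0:ℤ) ≤ (s:ℤ) := Int.natCast_nonneg s
    exact mul_nonneg (pow_nonneg hapos.le s) (hdpos _ (by omega)).le
  have hδ2nn : 0 ≤ δ2 := by
    rw [hδ2]
    apply tsum_nonneg
    intro s
    have hs : (0:ℤ) ≤ (s:ℤ) := Int.natCast_nonneg s
    exact mul_nonneg (pow_nonneg hapos.le s) (hdpos _ (by omega)).le
  -- bounds with concrete constants
  have hδ0A : δ0 ≤ 2 * (d 0 / 25) := by
    have h1 : d 0 / K ^ 2 * (1 - r)⁻¹ ≤ d 0 / K ^ 2 * 2 :=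
      mul_le_mul_of_nonneg_left hG (by positivity)
    have h2 : d 0 / K ^ 2 ≤ d 0 / 25 :=
      div_le_div_of_nonneg_left hd0.le (by norm_num) hK2
    linarith
  have hδ2A : a * δ2 ≤ 2 * (d 0 / 25) := by
    have h1 : d 0 / K ^ 4 * (1 - r)⁻¹ ≤ d 0 / K ^ 4 * 2 :=
      mul_le_mul_of_nonneg_left hG (by positivity)
    have h2 : δ2 ≤ 2 * (d 0 / K ^ 4) := by linarith
    have ha2 : a ≤ K ^ 2 := by nlinarith
    have h3 : a * δ2 ≤ K ^ 2 * (2 * (d 0 / K ^ 4)) :=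
      mul_le_mul ha2 h2 hδ2nn (by positivity)
    have h4 : K ^ 2 * (2 * (d 0 / K ^ 4)) = 2 * (d 0 / K ^ 2) := by
      field_simp
    have h5 : d 0 / K ^ 2 ≤ d 0 / 25 :=
      div_le_div_of_nonneg_left hd0.le (by norm_num) hK2
    linarith
  -- the recursion at n = -1
  have hm1 := hrecO (-1) le_rfl ⟨-1, by norm_num⟩
  rw [hdm] at hm1
  norm_num at hm1
  rw [← hδ0, ← hKdef] at hm1
  have h5d0 : 5 * d 0 ≤ K * d 0 := mul_le_mul_of_nonneg_right hK5 hd0.le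
  have hmain : d 0 + a * δ0 + a * δ2 < 1 := by
    nlinarith [hm1, hδ0A, hδ2A, hd1, h5d0, hd0]
  refine ⟨hmain, ?_⟩
  have hf00 : f0 0 = a * 0 + d 0 := hf1 0 le_rfl hδ0nn
  have hf01 : f0 1 = 1 + d 0 := hf4 1 hmain.le le_rfl
  rw [hf00, hf01]
  ring
end

section
/- Let Δ_n > 0 satisfy Δ_n = k_{n+2}Δ_{n+1} + Δ_{n+2} with positive integers k_n. Then for any integer 0 ≤ j_0 ≤ k_{n+1}-1, (Δ_n - k_{n+2}Δ_{n+1}) / (j_0 Δ_n + (k_{n+2}+1)Δ_{n+1}) ≤ Δ_{n+2}/Δ_n ≤ 1/(k_{n+2} k_{n+3}). -/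
theorem stmt17
    (k : ℤ → ℕ) (hk : ∀ n : ℤ, 1 ≤ n → 1 ≤ k n)
    (Δ : ℤ → ℝ) (hΔpos : ∀ n : ℤ, -1 ≤ n → 0 < Δ n)
    (hrec : ∀ n : ℤ, -1 ≤ n → Δ n = (k (n + 2) : ℝ) * Δ (n + 1) + Δ (n + 2)) :
    ∀ n : ℤ, -1 ≤ n → ∀ j₀ : ℕ, j₀ + 1 ≤ k (n + 1) →
      (Δ n - (k (n + 2) : ℝ) * Δ (n + 1)) /
          ((j₀ : ℝ) * Δ n + ((k (n + 2) : ℝ) + 1) * Δ (n + 1)) ≤ Δ (n + 2) / Δ n ∧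
      Δ (n + 2) / Δ n ≤ 1 / ((k (n + 2) : ℝ) * (k (n + 3) : ℝ)) := by
  intro n hn j₀ hj₀
  have h0 := hΔpos n hn
  have h1 := hΔpos (n + 1) (by linarith)
  have h2 := hΔpos (n + 2) (by linarith)
  have h3 := hΔpos (n + 3) (by linarith)
  have hr0 := hrec n hn
  have hr1 := hrec (n + 1) (by linarith)
  rw [show n + 1 + 2 = n + 3 from by ring, show n + 1 + 1 = n + 2 from by ring] at hr1
  have hk2 : (1 : ℝ) ≤ (k (n + 2) : ℝ) := by exact_mod_cast hk (n + 2) (by linarith)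
  have hk3 : (1 : ℝ) ≤ (k (n + 3) : ℝ) := by exact_mod_cast hk (n + 3) (by linarith)
  have hj : (0 : ℝ) ≤ (j₀ : ℝ) := Nat.cast_nonneg _
  have h21 : Δ (n + 2) ≤ Δ (n + 1) := by nlinarith
  constructor
  · have hD : 0 < (j₀ : ℝ) * Δ n + ((k (n + 2) : ℝ) + 1) * Δ (n + 1) := by nlinarith
    rw [div_le_div_iff₀ hD h0]
    nlinarith [mul_nonneg hj (le_of_lt h0)]
  · have hkk : (0 : ℝ) < (k (n + 2) : ℝ) * (k (n + 3) : ℝ) := by nlinarith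
    rw [div_le_div_iff₀ h0 hkk]
    nlinarith [mul_le_mul_of_nonneg_left h21 (by linarith : (0:ℝ) ≤ (k (n+2):ℝ))]
end

section
/- Let φ: S¹ → S¹ be a homeomorphism conjugating a uniquely ergodic circle homeomorphism T to the rigid rotation R_ρ (φ∘T∘φ^{-1} = R_ρ), with invariant measure μ. If φ is differentiable at every point of a set Θ of positive Lebesgue measure with derivative equal to a constant α > 0, then μ is not singular with respect to Lebesgue measure. -/
open MeasureTheory Filter Metric Set Topology
open scoped ENNReal

/-! If `μ ⟂ volume`, the density `μ (B(x, r)) / volume (B(x, r))` tends to `0` at almost every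
`x` (Lebesgue differentiation), in particular at some point of `Θ`. But at a point of `Θ` the map
`φ` expands small distances by a factor of at least `α / 2`, so `φ (B(x, r)) ⊇ B(φ x, α r / 2)`
and, since `φ` carries `μ` to Lebesgue measure, the density is at least `α / 2` for small `r`. -/

theorem MeasureTheory.Measure.MutuallySingular.ae_tendsto_measure_closedBall_div
    {X : Type*} [PseudoMetricSpace X] [MeasurableSpace X] [SecondCountableTopology X]
    [BorelSpace X] {μ ν : Measure X} [IsUnifLocDoublingMeasure ν] [IsLocallyFiniteMeasure ν]
    [IsLocallyFiniteMeasure μ] (h : μ ⟂ₘ ν) :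
    ∀ᵐ x ∂ν, Tendsto (fun r => μ (closedBall x r) / ν (closedBall x r)) (𝓝[>] 0) (𝓝 0) := by
  filter_upwards
    [(IsUnifLocDoublingMeasure.vitaliFamily ν 1).ae_eventually_measure_zero_of_singular h]
    with x hx
  refine hx.comp (IsUnifLocDoublingMeasure.tendsto_closedBall_filterAt ν (K := 1) (fun _ => x) id
    tendsto_id ?_)
  filter_upwards [self_mem_nhdsWithin] with r hr
  simpa using le_of_lt hr

theorem eventually_mul_dist_le_of_tendsto_dist_div {X Y : Type*} [MetricSpace X]
    [PseudoMetricSpace Y] {f : X → Y} {x : X} {α c : ℝ} (hc : c < α)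
    (h : Tendsto (fun y => dist (f y) (f x) / dist y x) (𝓝[≠] x) (𝓝 α)) :
    ∀ᶠ y in 𝓝 x, c * dist y x ≤ dist (f y) (f x) := by
  filter_upwards [eventually_nhdsWithin_iff.1 (h.eventually (eventually_gt_nhds hc))] with y hy
  rcases eq_or_ne y x with rfl | hne
  · simp
  · exact ((lt_div_iff₀ (dist_pos.2 hne)).1 (hy hne)).le

theorem Homeomorph.eventually_closedBall_subset_image_closedBall {X Y : Type*}
    [PseudoMetricSpace X] [PseudoMetricSpace Y] (f : X ≃ₜ Y) {x : X} {c : ℝ} (hc : 0 < c)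
    (h : ∀ᶠ y in 𝓝 x, c * dist y x ≤ dist (f y) (f x)) :
    ∀ᶠ r in 𝓝[>] 0, closedBall (f x) (c * r) ⊆ f '' closedBall x r := by
  obtain ⟨ε, hε, hexpand⟩ := Metric.eventually_nhds_iff.1 h
  obtain ⟨δ, hδ, hsymm⟩ := Metric.continuousAt_iff.1 f.symm.continuous.continuousAt ε hε
  filter_upwards [Ioo_mem_nhdsGT (div_pos hδ hc)] with r hr z hz
  refine ⟨f.symm z, ?_, f.apply_symm_apply z⟩
  rw [mem_closedBall] at hz ⊢
  have hzδ : dist z (f x) < δ := hz.trans_lt ((lt_div_iff₀' hc).1 hr.2)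
  have hclose : dist (f.symm z) x < ε := by simpa using hsymm hzδ
  have := hexpand hclose
  rw [f.apply_symm_apply] at this
  exact le_of_mul_le_mul_left (this.trans hz) hc

theorem AddCircle.volume_closedBall_of_le {T : ℝ} [Fact (0 < T)] {x : AddCircle T} {r : ℝ}
    (hr : 2 * r ≤ T) : volume (closedBall x r) = ENNReal.ofReal (2 * r) := by
  rw [AddCircle.volume_closedBall, min_eq_right hr]

theorem AddCircle.eventually_ofReal_le_measure_closedBall_div {T : ℝ} [Fact (0 < T)]
    {μ : Measure (AddCircle T)} (φ : AddCircle T ≃ₜ AddCircle T) (hφμ : μ.map φ = volume)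
    {x : AddCircle T} {c : ℝ} (hc : 0 < c) (h : ∀ᶠ y in 𝓝 x, c * dist y x ≤ dist (φ y) (φ x)) :
    ∀ᶠ r in 𝓝[>] 0, ENNReal.ofReal c ≤ μ (closedBall x r) / volume (closedBall x r) := by
  have hsmall : ∀ᶠ r in 𝓝 (0 : ℝ), 2 * r ≤ T ∧ 2 * (c * r) ≤ T := by
    refine .and ?_ ?_ <;>
    exact (Continuous.tendsto' (by fun_prop) 0 0 (by simp)).eventually
      (eventually_le_nhds Fact.out)
  filter_upwards [φ.eventually_closedBall_subset_image_closedBall hc h,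
    nhdsWithin_le_nhds hsmall, self_mem_nhdsWithin] with r hsub ⟨hr, hcr⟩ (hr₀ : 0 < r)
  have hμ : volume (closedBall (φ x) (c * r)) ≤ μ (closedBall x r) :=
    calc volume (closedBall (φ x) (c * r)) ≤ volume (φ '' closedBall x r) := measure_mono hsub
      _ = μ (closedBall x r) := by
        rw [← hφμ, φ.measurableEmbedding.map_apply, φ.preimage_image]
  calc ENNReal.ofReal c = ENNReal.ofReal (2 * (c * r)) / ENNReal.ofReal (2 * r) := by
        rw [← ENNReal.ofReal_div_of_pos (by positivity)]
        congr 1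
        field_simp
    _ ≤ μ (closedBall x r) / volume (closedBall x r) := by
        rw [AddCircle.volume_closedBall_of_le hr, ← AddCircle.volume_closedBall_of_le hcr]
        exact ENNReal.div_le_div_right hμ _

theorem stmt18_general
    (μ : Measure (AddCircle (1 : ℝ))) [IsProbabilityMeasure μ]
    (φ : Homeomorph (AddCircle (1 : ℝ)) (AddCircle (1 : ℝ)))
    (hφμ : Measure.map φ μ = volume)
    (Θ : Set (AddCircle (1 : ℝ))) (hΘ : 0 < volume Θ)
    (α : ℝ) (hα : 0 < α)
    (hdiff : ∀ η₀ ∈ Θ,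
      Tendsto (fun η => dist (φ η) (φ η₀) / dist η η₀) (nhdsWithin η₀ {η₀}ᶜ)
        (nhds α)) :
    ¬ μ.MutuallySingular volume := by
  intro hsing
  obtain ⟨x, hxΘ, hx⟩ := Measure.exists_mem_of_measure_ne_zero_of_ae hΘ.ne'
    (ae_restrict_of_ae hsing.ae_tendsto_measure_closedBall_div)
  have hexpand := eventually_mul_dist_le_of_tendsto_dist_div (half_lt_self hα) (hdiff x hxΘ)
  have hdensity :=
    AddCircle.eventually_ofReal_le_measure_closedBall_div φ hφμ (half_pos hα) hexpand
  exact (ENNReal.ofReal_pos.2 (half_pos hα)).not_ge (ge_of_tendsto hx hdensity)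

theorem stmt18
    (T : AddCircle (1 : ℝ) → AddCircle (1 : ℝ)) (hT : Continuous T)
    (μ : Measure (AddCircle (1 : ℝ))) [IsProbabilityMeasure μ]
    (hTinv : Measure.map T μ = μ)
    (huniq : ∀ ν : Measure (AddCircle (1 : ℝ)), IsProbabilityMeasure ν →
      Measure.map T ν = ν → ν = μ)
    (ρ : ℝ) (hρirr : Irrational ρ)
    (φ : Homeomorph (AddCircle (1 : ℝ)) (AddCircle (1 : ℝ)))
    (hconj : ∀ x, φ (T x) = φ x + (ρ : AddCircle (1 : ℝ)))
    (hφμ : Measure.map φ μ = volume)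
    (Θ : Set (AddCircle (1 : ℝ))) (hΘ : 0 < volume Θ)
    (α : ℝ) (hα : 0 < α)
    (hdiff : ∀ η₀ ∈ Θ,
      Tendsto (fun η => dist (φ η) (φ η₀) / dist η η₀) (nhdsWithin η₀ {η₀}ᶜ)
        (nhds α)) :
    ¬ μ.MutuallySingular volume :=
  stmt18_general μ φ hφμ Θ hΘ α hα hdiff
end

section
/- If ρ = [k_1, k_2, ...] with k_n = (n+5)², then ρ is a Roth number (i.e., for every δ > 0 there exists C > 0 with |ρ - p/q| ≥ C q^{-2-δ} for all rationals p/q), but ρ is not of bounded type. -/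
/-!
Let `P n / Q n` be the convergents. They alternate around `ρ` with gaps `1 / (Q n Q (n+1))`
decreasing at least geometrically, so `ρ - P n / Q n` is within a factor `2` of
`1 / (Q n Q (n+1))`. Given `p / b`, pick `n` with `Q n ≤ 2b ≤ Q (n+1)`. If `p / b ≠ P n / Q n`
then `|p / b - P n / Q n| ≥ 1 / (b Q n)` beats `|ρ - P n / Q n| ≤ 1 / (2 b Q n)`, giving
`|ρ - p / b| ≥ 1 / (4 b²)`. Otherwise `Q n ∣ b` and `|ρ - p / b| ≥ 1 / (2 Q n Q (n+1))`, which
is `≳ b^(-2-δ)` as soon as `Q (n+1) ≤ K Q n ^ (1+δ)`. For `k n = (n+5)²` this growth condition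
holds for every `δ > 0`, because `Q (n+1) / Q n ≤ k (n+1) + 1` is polynomial in `n` while `Q n`
grows at least like `36 ^ n`.
-/

open Filter Finset

theorem exists_le_and_le_succ {Q : ℕ → ℤ} {x : ℤ} (h0 : Q 0 ≤ x) (hx : ∃ m, x ≤ Q (m + 1)) :
    ∃ n, Q n ≤ x ∧ x ≤ Q (n + 1) := by
  classical
  refine ⟨Nat.find hx, ?_, Nat.find_spec hx⟩
  match hn : Nat.find hx with
  | 0 => exact h0
  | m + 1 => exact le_of_not_ge (Nat.find_min hx (by omega))

theorem inv_mul_le_abs_div_sub_div {a b p q : ℤ} (hb : 0 < b) (hq : 0 < q) (hne : a * q ≠ b * p) :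
    ((b : ℝ) * q)⁻¹ ≤ |(a : ℝ) / b - p / q| := by
  have hb' : (0 : ℝ) < b := by exact_mod_cast hb
  have hq' : (0 : ℝ) < q := by exact_mod_cast hq
  have hdiff : (a : ℝ) / b - p / q = ((a * q - b * p : ℤ) : ℝ) / (b * q) := by
    push_cast
    field_simp
  rw [hdiff, abs_div, abs_of_pos (mul_pos hb' hq'), inv_eq_one_div, ← Int.cast_abs]
  gcongr
  exact_mod_cast Int.one_le_abs (sub_ne_zero.2 hne)

theorem exists_add_one_pow_le_mul_pow (d : ℕ) {r : ℝ} (hr : 1 < r) :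
    ∃ M, ∀ n : ℕ, ((n : ℝ) + 1) ^ d ≤ M * r ^ n := by
  obtain ⟨M, hM⟩ := ((tendsto_pow_const_div_const_pow_of_one_lt d hr).comp
    (tendsto_add_atTop_nat 1)).bddAbove_range
  refine ⟨M * r, fun n ↦ ?_⟩
  have hn := hM ⟨n, rfl⟩
  simp only [Function.comp, Nat.cast_add, Nat.cast_one] at hn
  rw [div_le_iff₀ (by positivity)] at hn
  linarith [show M * r ^ (n + 1) = M * r * r ^ n by ring]

theorem exists_le_mul_rpow_of_le_mul_pow {Q : ℕ → ℝ} {c C δ : ℝ} {d : ℕ} (hc : 1 < c)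
    (hC : 0 ≤ C) (hQc : ∀ n, c ^ n ≤ Q n) (hQ : ∀ n, Q (n + 1) ≤ C * ((n : ℝ) + 1) ^ d * Q n)
    (hδ : 0 < δ) : ∃ K, 1 ≤ K ∧ ∀ n, Q (n + 1) ≤ K * Q n ^ (1 + δ) := by
  obtain ⟨M, hM⟩ := exists_add_one_pow_le_mul_pow d (Real.one_lt_rpow hc hδ)
  have hM0 : 0 ≤ M := by simpa using (hM 0).trans' (by positivity)
  refine ⟨max (C * M) 1, le_max_right _ _, fun n ↦ ?_⟩
  have hQn : 0 < Q n := (pow_pos (by linarith) n).trans_le (hQc n)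
  have hpow : (c ^ δ) ^ n ≤ Q n ^ δ := by
    rw [Real.rpow_pow_comm (by linarith)]
    exact Real.rpow_le_rpow (by positivity) (hQc n) hδ.le
  calc Q (n + 1) ≤ C * ((n : ℝ) + 1) ^ d * Q n := hQ n
    _ ≤ C * (M * (c ^ δ) ^ n) * Q n := by gcongr; exact hM n
    _ ≤ max (C * M) 1 * Q n ^ δ * Q n := by
      rw [← mul_assoc]
      gcongr
      exact le_max_left _ _
    _ = max (C * M) 1 * Q n ^ (1 + δ) := by rw [Real.rpow_one_add' hQn.le (by positivity)]; ring

/-- `P n / Q n` are the convergents of `[0; a₁, a₂, …]`, indexed so that `a n` is the partial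
quotient entering `P (n + 2)`; the first partial quotient only appears as `Q 1 ≥ 1`. -/
structure IsCFConvergents (a P Q : ℕ → ℤ) : Prop where
  one_le_partialQuot : ∀ n, 1 ≤ a n
  num_zero : P 0 = 0
  num_one : P 1 = 1
  den_zero : Q 0 = 1
  one_le_den_one : 1 ≤ Q 1
  num_add_two : ∀ n, P (n + 2) = a n * P (n + 1) + P n
  den_add_two : ∀ n, Q (n + 2) = a n * Q (n + 1) + Q n

namespace IsCFConvergents

variable {a P Q : ℕ → ℤ} {ρ δ K : ℝ}

theorem den_pos_and_le_succ (h : IsCFConvergents a P Q) (n : ℕ) :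
    0 < Q n ∧ Q n ≤ Q (n + 1) := by
  induction n with
  | zero => simp [h.den_zero, h.one_le_den_one]
  | succ n ih =>
    have := h.den_add_two n
    have := h.one_le_partialQuot n
    exact ⟨by linarith, by nlinarith⟩

theorem den_pos (h : IsCFConvergents a P Q) (n : ℕ) : 0 < Q n :=
  (h.den_pos_and_le_succ n).1

theorem cast_den_pos (h : IsCFConvergents a P Q) (n : ℕ) : (0 : ℝ) < Q n := by
  exact_mod_cast h.den_pos n

theorem den_mono (h : IsCFConvergents a P Q) : Monotone Q :=
  monotone_nat_of_le_succ fun n ↦ (h.den_pos_and_le_succ n).2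

theorem den_add_one_le_den_add_two (h : IsCFConvergents a P Q) (n : ℕ) :
    Q (n + 1) + Q n ≤ Q (n + 2) := by
  have := h.den_add_two n
  have := h.one_le_partialQuot n
  have := h.den_pos (n + 1)
  nlinarith

theorem two_mul_den_le (h : IsCFConvergents a P Q) (n : ℕ) : 2 * Q n ≤ Q (n + 2) := by
  linarith [h.den_add_one_le_den_add_two n, h.den_mono (Nat.le_succ n)]

theorem den_add_two_le (h : IsCFConvergents a P Q) (n : ℕ) :
    Q (n + 2) ≤ (a n + 1) * Q (n + 1) := by
  linarith [h.den_add_two n, h.den_mono (Nat.le_succ n)]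

theorem natCast_le_den (h : IsCFConvergents a P Q) (n : ℕ) : (n : ℤ) ≤ Q n := by
  induction n using Nat.twoStepInduction with
  | zero => simp [h.den_zero]
  | one => simpa using h.one_le_den_one
  | more n _ ih =>
    push_cast at ih ⊢
    linarith [h.den_add_one_le_den_add_two n, h.den_pos n]

theorem tendsto_den (h : IsCFConvergents a P Q) : Tendsto Q atTop atTop :=
  tendsto_atTop_mono h.natCast_le_den tendsto_natCast_atTop_atTop

theorem pow_le_den (h : IsCFConvergents a P Q) {c : ℤ} (hc : 0 ≤ c) (hc1 : c ≤ Q 1)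
    (hca : ∀ n, c ≤ a n) (n : ℕ) : c ^ n ≤ Q n := by
  induction n using Nat.twoStepInduction with
  | zero => simp [h.den_zero]
  | one => simpa using hc1
  | more n _ ih =>
    have := h.den_add_two n
    have := h.den_pos n
    have := h.den_pos (n + 1)
    calc c ^ (n + 2) = c * c ^ (n + 1) := by ring
      _ ≤ a n * Q (n + 1) := mul_le_mul (hca n) ih (by positivity) (by linarith [hca n])
      _ ≤ Q (n + 2) := by linarith

theorem num_mul_den_sub (h : IsCFConvergents a P Q) (n : ℕ) :
    P (n + 1) * Q n - P n * Q (n + 1) = (-1) ^ n := by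
  induction n with
  | zero => simp [h.num_zero, h.num_one, h.den_zero]
  | succ n ih =>
    rw [h.num_add_two, h.den_add_two, pow_succ]
    linear_combination (-1 : ℤ) * ih

theorem isCoprime (h : IsCFConvergents a P Q) (n : ℕ) : IsCoprime (Q n) (P n) :=
  have hsq : (-1 : ℤ) ^ n * (-1) ^ n = 1 := by rw [← pow_add, Even.neg_one_pow ⟨n, rfl⟩]
  ⟨(-1) ^ n * P (n + 1), -(-1) ^ n * Q (n + 1), by
    linear_combination (-1 : ℤ) ^ n * h.num_mul_den_sub n + hsq⟩

theorem convergent_succ_sub (h : IsCFConvergents a P Q) (n : ℕ) :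
    (P (n + 1) : ℝ) / Q (n + 1) - P n / Q n = (-1) ^ n * ((Q n : ℝ) * Q (n + 1))⁻¹ := by
  have hdet : ((P (n + 1) * Q n - P n * Q (n + 1) : ℤ) : ℝ) = (-1) ^ n := by
    exact_mod_cast h.num_mul_den_sub n
  have := h.cast_den_pos n
  have := h.cast_den_pos (n + 1)
  push_cast at hdet
  field_simp
  linear_combination hdet

theorem convergent_add_sub (h : IsCFConvergents a P Q) (n m : ℕ) :
    (P (n + m) : ℝ) / Q (n + m) - P n / Q n =
      (-1) ^ n * ∑ i ∈ range m, (-1) ^ i * ((Q (n + i) : ℝ) * Q (n + i + 1))⁻¹ := by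
  induction m with
  | zero => simp
  | succ m ih =>
    rw [sum_range_succ, ← add_assoc]
    linear_combination h.convergent_succ_sub (n + m) + ih

theorem antitone_inv_den_mul_den (h : IsCFConvergents a P Q) :
    Antitone fun n ↦ ((Q n : ℝ) * Q (n + 1))⁻¹ := by
  intro i j hij
  have hQ : ∀ i j, i ≤ j → (Q i : ℝ) ≤ Q j := fun i j hij ↦ by exact_mod_cast h.den_mono hij
  have := h.cast_den_pos i
  have := h.cast_den_pos (i + 1)
  exact inv_anti₀ (by positivity) (mul_le_mul (hQ _ _ hij) (hQ _ _ (by omega)) (by positivity)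
    (h.cast_den_pos j).le)

theorem inv_den_mul_den_succ_le (h : IsCFConvergents a P Q) (n : ℕ) :
    ((Q (n + 1) : ℝ) * Q (n + 2))⁻¹ ≤ ((Q n : ℝ) * Q (n + 1))⁻¹ / 2 := by
  have h2 : 2 * (Q n : ℝ) ≤ Q (n + 2) := by exact_mod_cast h.two_mul_den_le n
  have := h.cast_den_pos n
  have := h.cast_den_pos (n + 1)
  calc ((Q (n + 1) : ℝ) * Q (n + 2))⁻¹ ≤ ((Q (n + 1) : ℝ) * (2 * Q n))⁻¹ := by
        gcongr
    _ = ((Q n : ℝ) * Q (n + 1))⁻¹ / 2 := by ring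

theorem neg_one_pow_mul_sub_convergent_mem_Icc (h : IsCFConvergents a P Q)
    (hρ : Tendsto (fun n ↦ (P n : ℝ) / Q n) atTop (nhds ρ)) (n : ℕ) :
    (-1) ^ n * (ρ - P n / Q n) ∈
      Set.Icc (((Q n : ℝ) * Q (n + 1))⁻¹ - ((Q (n + 1) : ℝ) * Q (n + 2))⁻¹)
        ((Q n : ℝ) * Q (n + 1))⁻¹ := by
  set f : ℕ → ℝ := fun i ↦ ((Q (n + i) : ℝ) * Q (n + i + 1))⁻¹
  have hf : Antitone f :=
    h.antitone_inv_den_mul_den.comp_monotone fun _ _ hij ↦ Nat.add_le_add_left hij n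
  have hlim : Tendsto (fun m ↦ ∑ i ∈ range m, (-1) ^ i * f i) atTop
      (nhds ((-1) ^ n * (ρ - P n / Q n))) := by
    refine (((hρ.comp (tendsto_add_atTop_nat n)).sub_const _).const_mul ((-1) ^ n)).congr
      fun m ↦ ?_
    simp only [Function.comp, add_comm m n, h.convergent_add_sub, ← mul_assoc, ← pow_add,
      Even.neg_one_pow ⟨n, rfl⟩, one_mul, f]
  constructor
  · simpa [sum_range_succ, f, sub_eq_add_neg] using hf.alternating_series_le_tendsto hlim 1
  · simpa [f] using hf.tendsto_le_alternating_series hlim 0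

theorem abs_sub_convergent_eq (h : IsCFConvergents a P Q)
    (hρ : Tendsto (fun n ↦ (P n : ℝ) / Q n) atTop (nhds ρ)) (n : ℕ) :
    |ρ - P n / Q n| = (-1) ^ n * (ρ - P n / Q n) := by
  have hnonneg : 0 ≤ (-1) ^ n * (ρ - P n / Q n) :=
    le_trans (sub_nonneg.2 (h.antitone_inv_den_mul_den (Nat.le_succ n)))
      (h.neg_one_pow_mul_sub_convergent_mem_Icc hρ n).1
  rw [← abs_of_nonneg hnonneg, abs_mul, abs_neg_one_pow, one_mul]

theorem abs_sub_convergent_le (h : IsCFConvergents a P Q)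
    (hρ : Tendsto (fun n ↦ (P n : ℝ) / Q n) atTop (nhds ρ)) (n : ℕ) :
    |ρ - P n / Q n| ≤ ((Q n : ℝ) * Q (n + 1))⁻¹ :=
  h.abs_sub_convergent_eq hρ n ▸ (h.neg_one_pow_mul_sub_convergent_mem_Icc hρ n).2

theorem inv_den_mul_den_div_two_le_abs_sub_convergent (h : IsCFConvergents a P Q)
    (hρ : Tendsto (fun n ↦ (P n : ℝ) / Q n) atTop (nhds ρ)) (n : ℕ) :
    ((Q n : ℝ) * Q (n + 1))⁻¹ / 2 ≤ |ρ - P n / Q n| := by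
  rw [h.abs_sub_convergent_eq hρ n]
  linarith [(h.neg_one_pow_mul_sub_convergent_mem_Icc hρ n).1, h.inv_den_mul_den_succ_le n]

theorem div_rpow_le_abs_sub_convergent_of_den_le (h : IsCFConvergents a P Q)
    (hρ : Tendsto (fun n ↦ (P n : ℝ) / Q n) atTop (nhds ρ)) (hδ : 0 ≤ δ) (hK : 1 ≤ K)
    (hgrowth : ∀ n, (Q (n + 1) : ℝ) ≤ K * (Q n : ℝ) ^ (1 + δ)) {n : ℕ} {b : ℝ}
    (hQb : Q n ≤ b) : (4 * K)⁻¹ / b ^ ((2 : ℝ) + δ) ≤ |ρ - P n / Q n| := by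
  have hQnR := h.cast_den_pos n
  have := h.cast_den_pos (n + 1)
  have hQQ : (Q n : ℝ) * Q (n + 1) ≤ K * b ^ ((2 : ℝ) + δ) :=
    calc (Q n : ℝ) * Q (n + 1) ≤ Q n * (K * (Q n : ℝ) ^ (1 + δ)) := by gcongr; exact hgrowth n
      _ = K * (Q n : ℝ) ^ (1 + (1 + δ)) := by
        rw [Real.rpow_one_add' (y := 1 + δ) hQnR.le (by positivity)]; ring
      _ = K * (Q n : ℝ) ^ ((2 : ℝ) + δ) := by rw [show (1 : ℝ) + (1 + δ) = 2 + δ by ring]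
      _ ≤ K * b ^ ((2 : ℝ) + δ) := by gcongr
  have : 0 < K * b ^ ((2 : ℝ) + δ) := by
    have := hQnR.trans_le hQb
    positivity
  calc (4 * K)⁻¹ / b ^ ((2 : ℝ) + δ) = (4 * (K * b ^ ((2 : ℝ) + δ)))⁻¹ := by ring
    _ ≤ (2 * ((Q n : ℝ) * Q (n + 1)))⁻¹ := inv_anti₀ (by positivity) (by linarith)
    _ = ((Q n : ℝ) * Q (n + 1))⁻¹ / 2 := by ring
    _ ≤ |ρ - P n / Q n| := h.inv_den_mul_den_div_two_le_abs_sub_convergent hρ n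

theorem inv_four_mul_sq_le_abs_sub_div (h : IsCFConvergents a P Q)
    (hρ : Tendsto (fun n ↦ (P n : ℝ) / Q n) atTop (nhds ρ)) {n : ℕ} {p b : ℤ} (hb : 0 < b)
    (hQn : Q n ≤ 2 * b) (hQn1 : 2 * b ≤ Q (n + 1)) (hpb : p * Q n ≠ b * P n) :
    (4 * (b : ℝ) ^ 2)⁻¹ ≤ |ρ - (p : ℝ) / b| := by
  have hbR : (0 : ℝ) < b := by exact_mod_cast hb
  have hQnb : (Q n : ℝ) ≤ 2 * b := by exact_mod_cast hQn
  have hQn1R : 2 * (b : ℝ) ≤ Q (n + 1) := by exact_mod_cast hQn1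
  have := h.cast_den_pos n
  have hfar := inv_mul_le_abs_div_sub_div hb (h.den_pos n) hpb
  have hnear : |ρ - P n / Q n| ≤ ((b : ℝ) * Q n)⁻¹ / 2 :=
    calc |ρ - P n / Q n| ≤ ((Q n : ℝ) * Q (n + 1))⁻¹ := h.abs_sub_convergent_le hρ n
      _ ≤ ((Q n : ℝ) * (2 * b))⁻¹ := by gcongr
      _ = ((b : ℝ) * Q n)⁻¹ / 2 := by ring
  have htri := abs_sub_le ((p : ℝ) / b) ρ (P n / Q n)
  rw [abs_sub_comm ((p : ℝ) / b) ρ] at htri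
  calc (4 * (b : ℝ) ^ 2)⁻¹ ≤ (2 * ((b : ℝ) * Q n))⁻¹ := inv_anti₀ (by positivity) (by nlinarith)
    _ = ((b : ℝ) * Q n)⁻¹ / 2 := by ring
    _ ≤ |ρ - (p : ℝ) / b| := by linarith

theorem inv_four_mul_div_rpow_le_abs_sub_div (h : IsCFConvergents a P Q)
    (hρ : Tendsto (fun n ↦ (P n : ℝ) / Q n) atTop (nhds ρ)) (hδ : 0 ≤ δ) (hK : 1 ≤ K)
    (hgrowth : ∀ n, (Q (n + 1) : ℝ) ≤ K * (Q n : ℝ) ^ (1 + δ)) {p b : ℤ} (hb : 0 < b) :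
    (4 * K)⁻¹ / (b : ℝ) ^ ((2 : ℝ) + δ) ≤ |ρ - (p : ℝ) / b| := by
  obtain ⟨n, hQn, hQn1⟩ := exists_le_and_le_succ (x := 2 * b) (by rw [h.den_zero]; omega)
    (((tendsto_add_atTop_iff_nat 1).2 h.tendsto_den).eventually_ge_atTop (2 * b)).exists
  have hbR : (0 : ℝ) < b := by exact_mod_cast hb
  by_cases hpb : p * Q n = b * P n
  · have hQb : (Q n : ℝ) ≤ b := by
      exact_mod_cast Int.le_of_dvd hb ((h.isCoprime n).dvd_of_dvd_mul_right ⟨p, by linarith⟩)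
    have hconv : (p : ℝ) / b = P n / Q n := by
      rw [div_eq_div_iff hbR.ne' (h.cast_den_pos n).ne']
      exact_mod_cast hpb.trans (mul_comm b (P n))
    exact hconv ▸ h.div_rpow_le_abs_sub_convergent_of_den_le hρ hδ hK hgrowth hQb
  · have hb2 : (b : ℝ) ^ 2 ≤ (b : ℝ) ^ ((2 : ℝ) + δ) := by
      rw [← Real.rpow_two]
      exact Real.rpow_le_rpow_of_exponent_le (by exact_mod_cast hb) (by linarith)
    calc (4 * K)⁻¹ / (b : ℝ) ^ ((2 : ℝ) + δ) = (4 * (K * (b : ℝ) ^ ((2 : ℝ) + δ)))⁻¹ := by ring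
      _ ≤ (4 * (b : ℝ) ^ 2)⁻¹ := inv_anti₀ (by positivity) (by nlinarith)
      _ ≤ |ρ - (p : ℝ) / b| := h.inv_four_mul_sq_le_abs_sub_div hρ hb hQn hQn1 hpb

theorem exists_div_rpow_le_abs_sub_div (h : IsCFConvergents a P Q)
    (hρ : Tendsto (fun n ↦ (P n : ℝ) / Q n) atTop (nhds ρ)) (hδ : 0 ≤ δ) (hK : 1 ≤ K)
    (hgrowth : ∀ n, (Q (n + 1) : ℝ) ≤ K * (Q n : ℝ) ^ (1 + δ)) :
    ∃ C : ℝ, 0 < C ∧ ∀ p b : ℤ, b ≠ 0 →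
      C / (|b| : ℝ) ^ ((2 : ℝ) + δ) ≤ |ρ - (p : ℝ) / (b : ℝ)| := by
  refine ⟨(4 * K)⁻¹, by positivity, fun p b hb ↦ ?_⟩
  rcases hb.lt_or_gt with hneg | hpos
  · have hbR : (b : ℝ) < 0 := by exact_mod_cast hneg
    simpa [abs_of_neg hbR, neg_div_neg_eq] using
      h.inv_four_mul_div_rpow_le_abs_sub_div hρ hδ hK hgrowth (p := -p) (neg_pos.2 hneg)
  · have hbR : (0 : ℝ) < b := by exact_mod_cast hpos
    simpa [abs_of_pos hbR] using h.inv_four_mul_div_rpow_le_abs_sub_div hρ hδ hK hgrowth hpos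

theorem exists_den_succ_le_mul_rpow (h : IsCFConvergents a P Q)
    (ha : ∀ n, a n = ((n : ℤ) + 7) ^ 2) (hQ1 : Q 1 = 36) (hδ : 0 < δ) :
    ∃ K, 1 ≤ K ∧ ∀ n, (Q (n + 1) : ℝ) ≤ K * (Q n : ℝ) ^ (1 + δ) := by
  have h36 : ∀ n, (36 : ℤ) ^ n ≤ Q n :=
    h.pow_le_den (by norm_num) hQ1.ge fun n ↦ by rw [ha]; nlinarith [Int.natCast_nonneg n]
  have hratio : ∀ n : ℕ, Q (n + 1) ≤ 37 * ((n : ℤ) + 1) ^ 2 * Q n := by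
    rintro (_ | n)
    · simp [hQ1, h.den_zero]
    · push_cast
      calc Q (n + 2) ≤ (a n + 1) * Q (n + 1) := h.den_add_two_le n
        _ ≤ 37 * ((n : ℤ) + 1 + 1) ^ 2 * Q (n + 1) := by
          have := h.den_pos (n + 1)
          gcongr
          nlinarith [ha n, Int.natCast_nonneg n]
  exact exists_le_mul_rpow_of_le_mul_pow (Q := fun n ↦ (Q n : ℝ)) (c := 36) (C := 37) (d := 2)
    (by norm_num) (by norm_num)
    (fun n ↦ by exact_mod_cast h36 n) (fun n ↦ by exact_mod_cast hratio n) hδ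

end IsCFConvergents

theorem natCast_add_two_rec {k x : ℤ → ℤ}
    (hx : ∀ n : ℤ, 1 ≤ n → x n = k n * x (n - 1) + x (n - 2)) (n : ℕ) :
    x ((n + 2 : ℕ) : ℤ) = k (n + 2) * x ((n + 1 : ℕ) : ℤ) + x n := by
  have hxn := hx (n + 2) (by omega)
  rw [show (n : ℤ) + 2 - 1 = n + 1 by ring, add_sub_cancel_right] at hxn
  push_cast
  exact hxn

theorem stmt19
    (k : ℤ → ℤ) (hk : ∀ n : ℤ, 1 ≤ n → k n = (n + 5) ^ 2)
    (p q : ℤ → ℤ)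
    (hp0 : p 0 = 0) (hq0 : q 0 = 1) (hpm : p (-1) = 1) (hqm : q (-1) = 0)
    (hp : ∀ n : ℤ, 1 ≤ n → p n = k n * p (n - 1) + p (n - 2))
    (hq : ∀ n : ℤ, 1 ≤ n → q n = k n * q (n - 1) + q (n - 2))
    (ρ : ℝ)
    (hρ : Tendsto (fun n : ℕ => (p n : ℝ) / (q n : ℝ)) atTop (nhds ρ)) :
    (∀ δ : ℝ, 0 < δ → ∃ C : ℝ, 0 < C ∧ ∀ a b : ℤ, b ≠ 0 →
      C / (|b| : ℝ) ^ ((2 : ℝ) + δ) ≤ |ρ - (a : ℝ) / (b : ℝ)|) ∧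
    ¬ ∃ B : ℤ, ∀ n : ℤ, 1 ≤ n → k n ≤ B := by
  have hk' : ∀ n : ℕ, k (n + 2) = ((n : ℤ) + 7) ^ 2 := fun n ↦ by rw [hk _ (by omega)]; ring
  have hq1 : q 1 = 36 := by simp [hq 1 le_rfl, hk 1 le_rfl, hq0, hqm]
  have hcf : IsCFConvergents (fun n ↦ k (n + 2)) (fun n : ℕ ↦ p n) (fun n : ℕ ↦ q n) :=
    { one_le_partialQuot := fun n ↦ by rw [hk']; nlinarith [Int.natCast_nonneg n]
      num_zero := by simpa using hp0
      num_one := by simp [hp 1 le_rfl, hp0, hpm]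
      den_zero := by simpa using hq0
      one_le_den_one := by simp [hq1]
      num_add_two := natCast_add_two_rec hp
      den_add_two := natCast_add_two_rec hq }
  refine ⟨fun δ hδ ↦ ?_, fun ⟨B, hB⟩ ↦ ?_⟩
  · obtain ⟨K, hK, hgrowth⟩ := hcf.exists_den_succ_le_mul_rpow hk' (by simpa using hq1) hδ
    exact hcf.exists_div_rpow_le_abs_sub_div hρ hδ.le hK hgrowth
  · have hB1 : 1 ≤ |B| + 1 := by linarith [abs_nonneg B]
    have hbig := hB _ hB1
    rw [hk _ hB1] at hbig
    nlinarith [le_abs_self B, abs_nonneg B]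
end
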